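/- Model rules abstractly as follows: a rule consists of a body B (a finite set of atoms) and a head that is a finite list of disjoint components D_1,...,D_m (each a finite set of atoms). Say the rule has disconnected disjunction if no two distinct head components D_i, D_j share a variable with the same connected component of B (connected components taken in the variable-hypergraph of B). Consider a rewriting step that, for some index i, removes D_i and replaces the body by B ∪ B' for some finite set of atoms B', where the variables of B' may only intersect variables of B lying in connected components of B that share variables with D_i (plus fresh variables). Then the resulting rule also has disconnected disjunction. -/

import Mathlib

/-- A relational atom over predicates `P`, variables `V` and constants `C`. -/
structure Atom (P V C : Type*) where
  pred : P
  args : List (V ⊕ C)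
deriving DecidableEq

/-- The variables occurring in an atom. -/
def Atom.vars {P V C : Type*} (a : Atom P V C) : Set V := {v | Sum.inl v ∈ a.args}

/-- The variables occurring in a finite set of atoms. -/
def varsFS {P V C : Type*} (F : Finset (Atom P V C)) : Set V :=
  {v | ∃ a ∈ F, v ∈ a.vars}

/-- Connectivity of variables in the variable-hypergraph of `F`. -/
def connR {P V C : Type*} (F : Finset (Atom P V C)) : V → V → Prop :=
  Relation.ReflTransGen (fun u v : V => ∃ a ∈ F, u ∈ a.vars ∧ v ∈ a.vars)

/-- Disconnected disjunction: no two distinct head components share a variable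
with the same connected component of the body `B`. -/
def DD {P V C : Type*} (B : Finset (Atom P V C))
    (H : List (Finset (Atom P V C))) : Prop :=
  ∀ i j : Fin H.length, i ≠ j → ∀ u v : V,
    u ∈ varsFS (H.get i) → v ∈ varsFS (H.get j) →
    u ∈ varsFS B → v ∈ varsFS B → ¬ connR B u v

/-!
Let `u, v` be body variables of two surviving head components, connected in `B ∪ B'`. If the
`B`-component of `u` meets no variable of `B'`, a connecting path can never use an atom of `B'`,
so `u` and `v` are already connected in `B`, contradicting disconnectedness of the old rule.
Otherwise that component meets `B'` in a non-fresh variable, which by hypothesis is `B`-connected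
to the removed component `D_i`; then `u` is `B`-connected to `D_i`, again a contradiction.
-/

theorem List.exists_injective_get_eraseIdx {α : Type*} (l : List α) (i : Fin l.length) :
    ∃ f : Fin (l.eraseIdx i).length → Fin l.length, Function.Injective f ∧
      (∀ j, f j ≠ i) ∧ ∀ j, (l.eraseIdx i).get j = l.get (f j) := by
  have hlen : (l.eraseIdx i).length = l.length - 1 := List.length_eraseIdx_of_lt i.isLt
  refine ⟨fun j => if (j : ℕ) < i then ⟨j, by omega⟩ else ⟨j + 1, by omega⟩, ?_, ?_, ?_⟩
  · intro j k hjk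
    beta_reduce at hjk
    split_ifs at hjk <;> simp only [Fin.mk.injEq] at hjk <;> omega
  · intro j
    beta_reduce
    split_ifs <;> simp only [ne_eq, Fin.ext_iff] <;> omega
  · intro j
    by_cases hj : (j : ℕ) < i <;> simp [List.getElem_eraseIdx, hj]

section Connectivity

variable {P V C : Type*} {B B' : Finset (Atom P V C)} {u v : V}

theorem varsFS_union [DecidableEq P] [DecidableEq V] [DecidableEq C] :
    varsFS (B ∪ B') = varsFS B ∪ varsFS B' := by
  ext v
  simp only [varsFS, Finset.mem_union, Set.mem_ofPred_eq, Set.mem_union, or_and_right, exists_or]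

theorem connR_symm (h : connR B u v) : connR B v u :=
  haveI : Std.Symm fun u v : V => ∃ a ∈ B, u ∈ a.vars ∧ v ∈ a.vars :=
    ⟨fun _ _ ⟨a, ha, hu, hv⟩ => ⟨a, ha, hv, hu⟩⟩
  Std.Symm.symm (r := Relation.ReflTransGen _) _ _ h

theorem mem_varsFS_of_connR (h : connR B u v) (hu : u ∈ varsFS B) : v ∈ varsFS B := by
  rcases Relation.ReflTransGen.cases_tail h with rfl | ⟨w, -, a, ha, -, hv⟩
  · exact hu
  · exact ⟨a, ha, hv⟩

theorem connR_of_connR_union [DecidableEq P] [DecidableEq V] [DecidableEq C]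
    (hu : ∀ w, connR B u w → w ∉ varsFS B') (h : connR (B ∪ B') u v) : connR B u v := by
  induction h with
  | refl => exact Relation.ReflTransGen.refl
  | tail _ edge ih =>
    obtain ⟨a, ha, hw, hv⟩ := edge
    rcases Finset.mem_union.mp ha with haB | haB'
    · exact Relation.ReflTransGen.tail ih ⟨a, haB, hw, hv⟩
    · exact absurd ⟨a, haB', hw⟩ (hu _ ih)

end Connectivity

/-- a rewriting step that removes the head component `H.get i`
and adds to the body atoms `B'` whose variables either are fresh (occur in no
head component) or lie in connected components of `B` sharing variables with
`H.get i`, preserves disconnected disjunction. -/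
theorem stmt11 {P V C : Type*} [DecidableEq P] [DecidableEq V] [DecidableEq C]
    (B B' : Finset (Atom P V C)) (H : List (Finset (Atom P V C)))
    (i : Fin H.length)
    (hDD : DD B H)
    (hshared : ∀ v ∈ varsFS B', v ∈ varsFS B →
      ∃ u ∈ varsFS (H.get i), u ∈ varsFS B ∧ connR B u v)
    (hfresh : ∀ v ∈ varsFS B', v ∉ varsFS B →
      ∀ j : Fin H.length, v ∉ varsFS (H.get j)) :
    DD (B ∪ B') (H.eraseIdx i) := by
  intro j k hjk u v hu hv huB hvB huv
  obtain ⟨f, hf_inj, hf_ne, hf_get⟩ := H.exists_injective_get_eraseIdx i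
  rw [hf_get] at hu hv
  have mem_body : ∀ {w} l, w ∈ varsFS (H.get (f l)) → w ∈ varsFS (B ∪ B') → w ∈ varsFS B :=
    fun {w} l hwH hw => by
      rw [varsFS_union] at hw
      by_contra hwB
      exact hfresh w (hw.resolve_left hwB) hwB (f l) hwH
  have huB := mem_body j hu huB
  by_cases htouch : ∃ w, connR B u w ∧ w ∈ varsFS B'
  · obtain ⟨w, huw, hw⟩ := htouch
    obtain ⟨p, hp, hpB, hpw⟩ := hshared w hw (mem_varsFS_of_connR huw huB)
    exact hDD i (f j) (hf_ne j).symm p u hp hu hpB huB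
      (Relation.ReflTransGen.trans hpw (connR_symm huw))
  · push Not at htouch
    exact hDD (f j) (f k) (hf_inj.ne hjk) u v hu hv huB (mem_body k hv hvB)
      (connR_of_connR_union htouch huv)
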